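/- Let d1, d2 ∈ [0, 1/2). For ℓ ∈ ℤ with |ℓ| large, the integral I(ℓ) = ∫₁^∞ [(x-1)^(-2d1) - x^(-2d1)] |ℓ+x|^(d1+d2-1) dx satisfies I(ℓ) = O(|ℓ|^(d1+d2-1)), i.e., there exists K > 0 such that |I(ℓ)| ≤ K |ℓ|^(d1+d2-1) for all ℓ ≠ 0. -/

import Mathlib

/-!
If `d1 = 0` the integrand vanishes, so let `d1 > 0`; then `q = d1 + d2 - 1 ∈ (-1, 0)`. The weight
`f x = (x - 1) ^ (-2 d1) - x ^ (-2 d1)` is nonnegative and integrable on `(1, ∞)`, and by the mean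
value theorem `f x ≤ (x - 1)⁻¹` for `x ≥ 2`. Where `|ℓ + x| ≥ |ℓ| / 2` the factor `|ℓ + x| ^ q`
is at most `(|ℓ| / 2) ^ q`, which contributes `(|ℓ| / 2) ^ q ∫ f`. On the window
`|ℓ + x| < |ℓ| / 2` around the singularity we have `f ≤ 4 / |ℓ|` once `|ℓ| ≥ 4`, and
`|ℓ + x| ^ q` integrates there to `|ℓ| (|ℓ| / 2) ^ q / (q + 1)`. Hence `I(ℓ) = O(|ℓ| ^ q)` for
`|ℓ| ≥ 4`, and the finitely many remaining `ℓ ≠ 0` only enlarge the constant.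
-/

open MeasureTheory Real Set Filter

lemma rpow_neg_sub_rpow_neg_add_one_le {p a : ℝ} (hp : 0 ≤ p) (ha : 0 < a) :
    a ^ (-p) - (a + 1) ^ (-p) ≤ p * a ^ (-p - 1) := by
  obtain ⟨c, hc, hslope⟩ := exists_hasDerivAt_eq_slope (fun t : ℝ => t ^ (-p))
    (fun t => -p * t ^ (-p - 1)) (lt_add_one a)
    (fun x hx =>
      (continuousAt_rpow_const x (-p) (Or.inl (ha.trans_le hx.1).ne')).continuousWithinAt)
    (fun x hx => hasDerivAt_rpow_const (Or.inl (ha.trans hx.1).ne'))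
  have hc_le : c ^ (-p - 1) ≤ a ^ (-p - 1) := rpow_le_rpow_of_nonpos ha hc.1.le (by linarith)
  rw [add_sub_cancel_left, div_one] at hslope
  nlinarith [mul_le_mul_of_nonneg_left hc_le hp]

section ShiftedPowerDifference

variable {p x : ℝ}

lemma sub_one_rpow_neg_sub_rpow_neg_nonneg (hp : 0 ≤ p) (hx : 1 < x) :
    0 ≤ (x - 1) ^ (-p) - x ^ (-p) :=
  sub_nonneg.2 <| rpow_le_rpow_of_nonpos (by linarith) (by linarith) (by linarith)

lemma sub_one_rpow_neg_sub_rpow_neg_le (hp : 0 ≤ p) (hx : 1 < x) :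
    (x - 1) ^ (-p) - x ^ (-p) ≤ p * (x - 1) ^ (-p - 1) := by
  simpa using rpow_neg_sub_rpow_neg_add_one_le hp (sub_pos.2 hx)

lemma sub_one_rpow_neg_sub_rpow_neg_le_inv (hp₀ : 0 ≤ p) (hp₁ : p ≤ 1) (hx : 2 ≤ x) :
    (x - 1) ^ (-p) - x ^ (-p) ≤ (x - 1)⁻¹ :=
  calc (x - 1) ^ (-p) - x ^ (-p) ≤ p * (x - 1) ^ (-p - 1) :=
        sub_one_rpow_neg_sub_rpow_neg_le hp₀ (by linarith)
    _ ≤ 1 * (x - 1) ^ (-1 : ℝ) := by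
        gcongr
        · exact rpow_nonneg (by linarith) _
        · linarith
        · linarith
    _ = (x - 1)⁻¹ := by rw [one_mul, rpow_neg_one]

lemma integrableOn_Ioi_sub_one_rpow_neg_sub_rpow_neg (hp₀ : 0 ≤ p) (hp₁ : p < 1) :
    IntegrableOn (fun x : ℝ => (x - 1) ^ (-p) - x ^ (-p)) (Ioi 1) := by
  have hmeas : AEStronglyMeasurable (fun x : ℝ => (x - 1) ^ (-p) - x ^ (-p)) :=
    (((measurable_id.sub_const 1).pow_const _).sub (measurable_id.pow_const _)).aestronglyMeasurable
  have hnorm {x : ℝ} (hx : 1 < x) : ‖(x - 1) ^ (-p) - x ^ (-p)‖ = (x - 1) ^ (-p) - x ^ (-p) :=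
    Real.norm_of_nonneg (sub_one_rpow_neg_sub_rpow_neg_nonneg hp₀ hx)
  rw [← Ioc_union_Ioi_eq_Ioi one_le_two]
  refine IntegrableOn.union ?_ ?_
  · have hdom : IntegrableOn (fun x : ℝ => (x - 1) ^ (-p)) (Ioc 1 2) := by
      have := (intervalIntegral.intervalIntegrable_rpow' (a := 0) (b := 1)
        (by linarith : -1 < -p)).comp_sub_right 1
      norm_num at this
      exact (intervalIntegrable_iff_integrableOn_Ioc_of_le one_le_two).1 this
    refine hdom.mono' hmeas.restrict <| (ae_restrict_iff' measurableSet_Ioc).2 <|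
      .of_forall fun x hx => ?_
    rw [hnorm hx.1]
    linarith [rpow_nonneg (by linarith [hx.1] : (0:ℝ) ≤ x) (-p)]
  · rcases hp₀.eq_or_lt with rfl | hp
    · simp
    have hdom : IntegrableOn (fun x : ℝ => p * (x - 1) ^ (-p - 1)) (Ioi 2) := by
      have := ((measurePreserving_sub_right volume (1:ℝ)).integrableOn_comp_preimage
        (measurableEmbedding_subRight 1)).2
        ((integrableOn_Ioi_rpow_of_lt (by linarith : -p - 1 < -1) one_pos).const_mul p)
      norm_num at this
      exact this
    refine hdom.mono' hmeas.restrict <| (ae_restrict_iff' measurableSet_Ioi).2 <|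
      .of_forall fun x (hx : 2 < x) => ?_
    rw [hnorm (by linarith)]
    exact sub_one_rpow_neg_sub_rpow_neg_le hp₀ (by linarith)

end ShiftedPowerDifference

section AbsRpow

variable {α : ℝ}

lemma intervalIntegrable_abs_rpow (hα : -1 < α) (a b : ℝ) :
    IntervalIntegrable (fun u : ℝ => |u| ^ α) volume a b := by
  have hnonneg {c : ℝ} (hc : 0 ≤ c) : IntervalIntegrable (fun u : ℝ => |u| ^ α) volume 0 c :=
    (intervalIntegral.intervalIntegrable_rpow' hα).congr_uIoo fun u hu => by
      rw [uIoo_of_le hc] at hu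
      simp [abs_of_pos hu.1]
  have hfrom_zero (c : ℝ) : IntervalIntegrable (fun u : ℝ => |u| ^ α) volume 0 c := by
    rcases le_total 0 c with hc | hc
    · exact hnonneg hc
    · rw [IntervalIntegrable.iff_comp_neg]
      simpa using hnonneg (neg_nonneg.2 hc)
  exact (hfrom_zero a).symm.trans (hfrom_zero b)

lemma integral_abs_rpow (hα : -1 < α) {r : ℝ} (hr : 0 ≤ r) :
    ∫ u in (-r)..r, |u| ^ α = 2 * (r ^ (α + 1) / (α + 1)) := by
  have hright : ∫ u in (0:ℝ)..r, |u| ^ α = r ^ (α + 1) / (α + 1) := by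
    rw [intervalIntegral.integral_congr (g := fun u => u ^ α) fun u hu => by
      rw [uIcc_of_le hr] at hu
      simp [abs_of_nonneg hu.1]]
    rw [integral_rpow (Or.inl hα), zero_rpow (by linarith), sub_zero]
  have hleft : ∫ u in (-r)..0, |u| ^ α = r ^ (α + 1) / (α + 1) := by
    rw [← hright, ← neg_zero, ← intervalIntegral.integral_comp_neg]
    simp
  rw [← intervalIntegral.integral_add_adjacent_intervals (intervalIntegrable_abs_rpow hα _ _)
    (intervalIntegrable_abs_rpow hα _ _), hleft, hright]
  ring

lemma integrableOn_abs_sub_rpow_Ioc (hα : -1 < α) (m r : ℝ) :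
    IntegrableOn (fun x : ℝ => |x - m| ^ α) (Ioc (m - r) (m + r)) := by
  have := ((intervalIntegrable_abs_rpow hα (-r) r).comp_sub_right m).def'
  rw [neg_add_eq_sub, add_comm] at this
  exact this.mono_set Ioc_subset_uIoc

lemma integral_abs_sub_rpow_Ioc (hα : -1 < α) (m : ℝ) {r : ℝ} (hr : 0 ≤ r) :
    ∫ x in Ioc (m - r) (m + r), |x - m| ^ α = 2 * (r ^ (α + 1) / (α + 1)) := by
  rw [← intervalIntegral.integral_of_le (by linarith),
    intervalIntegral.integral_comp_sub_right (fun u => |u| ^ α), sub_sub_cancel_left,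
    add_sub_cancel_left, integral_abs_rpow hα hr]

end AbsRpow

lemma setIntegral_mul_abs_sub_rpow_le {f : ℝ → ℝ} {s : Set ℝ} {q c r B : ℝ}
    (hs : MeasurableSet s) (hf₀ : ∀ x ∈ s, 0 ≤ f x) (hf : IntegrableOn f s)
    (hq₁ : -1 < q) (hq₀ : q ≤ 0) (hr : 0 < r) (hB : 0 ≤ B)
    (hfB : ∀ x ∈ s, x ∈ Ioc (c - r) (c + r) → f x ≤ B) :
    ∫ x in s, f x * |x - c| ^ q ≤
      r ^ q * (∫ x in s, f x) + B * (2 * (r ^ (q + 1) / (q + 1))) := by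
  set near := Ioc (c - r) (c + r)
  have hnear : IntegrableOn (near.indicator fun x => |x - c| ^ q) s :=
    ((integrable_indicator_iff measurableSet_Ioc).2
      (integrableOn_abs_sub_rpow_Ioc hq₁ c r)).integrableOn
  have hdom : ∀ x ∈ s,
      f x * |x - c| ^ q ≤ r ^ q * f x + B * near.indicator (|· - c| ^ q) x := by
    intro x hx
    by_cases hxn : x ∈ near
    · rw [indicator_of_mem hxn]
      nlinarith [hfB x hx hxn, hf₀ x hx, rpow_nonneg hr.le q, rpow_nonneg (abs_nonneg (x - c)) q]
    · rw [indicator_of_notMem hxn, mul_zero, add_zero, mul_comm (r ^ q)]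
      have hrx : r ≤ |x - c| := by
        simp only [near, mem_Ioc, not_and_or, not_lt, not_le] at hxn
        rcases hxn with h | h
        · rw [abs_sub_comm]; exact (le_abs_self _).trans' (by linarith)
        · exact (le_abs_self _).trans' (by linarith)
      exact mul_le_mul_of_nonneg_left (rpow_le_rpow_of_nonpos hr hrx hq₀) (hf₀ x hx)
  have hnear_le : ∫ x in s, near.indicator (|· - c| ^ q) x ≤ 2 * (r ^ (q + 1) / (q + 1)) := by
    rw [setIntegral_indicator measurableSet_Ioc, ← integral_abs_sub_rpow_Ioc hq₁ c hr.le]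
    exact setIntegral_mono_set (integrableOn_abs_sub_rpow_Ioc hq₁ c r)
      (.of_forall fun x => rpow_nonneg (abs_nonneg _) _) inter_subset_right.eventuallyLE
  calc ∫ x in s, f x * |x - c| ^ q
      ≤ ∫ x in s, (r ^ q * f x + B * near.indicator (|· - c| ^ q) x) :=
        integral_mono_of_nonneg
          ((ae_restrict_iff' hs).2 <| .of_forall fun x hx =>
            mul_nonneg (hf₀ x hx) (rpow_nonneg (abs_nonneg _) _))
          ((hf.const_mul _).add (hnear.const_mul _))
          ((ae_restrict_iff' hs).2 <| .of_forall hdom)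
    _ = r ^ q * (∫ x in s, f x) + B * ∫ x in s, near.indicator (|· - c| ^ q) x := by
        rw [integral_add (hf.const_mul _) (hnear.const_mul _), integral_const_mul,
          integral_const_mul]
    _ ≤ r ^ q * (∫ x in s, f x) + B * (2 * (r ^ (q + 1) / (q + 1))) := by
        gcongr

lemma abs_setIntegral_mul_abs_add_rpow_le {f : ℝ → ℝ} {q ℓ : ℝ}
    (hf₀ : ∀ x ∈ Ioi (1 : ℝ), 0 ≤ f x) (hf : IntegrableOn f (Ioi 1))
    (hf_le : ∀ x, 2 ≤ x → f x ≤ (x - 1)⁻¹) (hq₁ : -1 < q) (hq₀ : q ≤ 0) (hℓ : 4 ≤ |ℓ|) :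
    |∫ x in Ioi 1, f x * |ℓ + x| ^ q| ≤ ((∫ x in Ioi 1, f x) + 4 / (q + 1)) * (|ℓ| / 2) ^ q := by
  have hℓ₀ : 0 < |ℓ| := by linarith
  rw [abs_of_nonneg (setIntegral_nonneg measurableSet_Ioi fun x hx =>
    mul_nonneg (hf₀ x hx) (rpow_nonneg (abs_nonneg _) _))]
  have hfB : ∀ x ∈ Ioi (1 : ℝ), x ∈ Ioc (-ℓ - |ℓ| / 2) (-ℓ + |ℓ| / 2) → f x ≤ 4 / |ℓ| := by
    rintro x (hx : 1 < x) ⟨hlo, hhi⟩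
    have hx_far : |ℓ| / 4 ≤ x - 1 := by
      cases abs_cases ℓ <;> linarith
    calc f x ≤ (x - 1)⁻¹ := hf_le x (by linarith)
      _ ≤ (|ℓ| / 4)⁻¹ := inv_anti₀ (by positivity) hx_far
      _ = 4 / |ℓ| := inv_div _ _
  have key := setIntegral_mul_abs_sub_rpow_le measurableSet_Ioi hf₀ hf hq₁ hq₀
    (half_pos hℓ₀) (by positivity) hfB
  simp only [sub_neg_eq_add, add_comm _ ℓ] at key
  refine key.trans_eq ?_
  rw [rpow_add_one (half_pos hℓ₀).ne']
  field_simp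

lemma exists_pos_forall_abs_le_mul_of_eventually_cofinite {ι : Type*} {P : ι → Prop}
    {a b : ι → ℝ} {K : ℝ} (hb : ∀ i, P i → 0 < b i)
    (h : ∀ᶠ i in cofinite, |a i| ≤ K * b i) :
    ∃ K' > 0, ∀ i, P i → |a i| ≤ K' * b i := by
  obtain ⟨S, hS⟩ : ∃ S : Finset ι, ∀ i ∉ S, |a i| ≤ K * b i :=
    ⟨(eventually_cofinite.1 h).toFinset, fun i hi => by simpa using hi⟩
  have hsum : 0 ≤ ∑ j ∈ S, |a j| / |b j| := by positivity
  refine ⟨max K 0 + 1 + ∑ j ∈ S, |a j| / |b j|, by positivity, fun i hi => ?_⟩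
  have hbi := hb i hi
  by_cases hiS : i ∈ S
  · calc |a i| = |a i| / |b i| * b i := by
          rw [abs_of_pos hbi, div_mul_cancel₀ _ hbi.ne']
      _ ≤ (∑ j ∈ S, |a j| / |b j|) * b i := by
          gcongr
          exact Finset.single_le_sum (f := fun j => |a j| / |b j|)
            (fun j _ => by positivity) hiS
      _ ≤ _ := by gcongr; linarith [le_max_right K 0]
  · calc |a i| ≤ K * b i := hS i hiS
      _ ≤ _ := by gcongr; linarith [le_max_left K 0]

theorem stmt_0 (d1 d2 : ℝ) (hd1 : d1 ∈ Set.Ico (0:ℝ) (1/2))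
    (hd2 : d2 ∈ Set.Ico (0:ℝ) (1/2)) :
    ∃ K > (0:ℝ), ∀ ℓ : ℤ, ℓ ≠ 0 →
      |∫ x in Set.Ioi (1:ℝ),
          ((x - 1) ^ (-2 * d1) - x ^ (-2 * d1)) * |(ℓ : ℝ) + x| ^ (d1 + d2 - 1)| ≤
        K * |(ℓ : ℝ)| ^ (d1 + d2 - 1) := by
  obtain ⟨hd1₀, hd1₁⟩ := hd1
  obtain ⟨hd2₀, hd2₁⟩ := hd2
  rcases hd1₀.eq_or_lt with rfl | hd1₀
  · exact ⟨1, one_pos, fun ℓ _ => by simpa using rpow_nonneg (abs_nonneg (ℓ : ℝ)) _⟩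
  have hq₁ : -1 < d1 + d2 - 1 := by linarith
  have hq₀ : d1 + d2 - 1 ≤ 0 := by linarith
  set q := d1 + d2 - 1
  simp only [neg_mul]
  set C := ∫ x in Ioi (1 : ℝ), ((x - 1) ^ (-(2 * d1)) - x ^ (-(2 * d1)))
  refine exists_pos_forall_abs_le_mul_of_eventually_cofinite (K := (C + 4 / (q + 1)) / 2 ^ q)
    (fun ℓ (hℓ : ℓ ≠ 0) => rpow_pos_of_pos (abs_pos.2 (Int.cast_ne_zero.2 hℓ)) q) ?_
  filter_upwards [(finite_Ioo (-4 : ℤ) 4).eventually_cofinite_notMem] with ℓ hℓ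
  have hℓ4 : (4 : ℝ) ≤ |(ℓ : ℝ)| := by
    simp only [mem_Ioo, not_and_or, not_lt] at hℓ
    rw [← Int.cast_abs]
    exact_mod_cast (le_abs.2 (by omega) : (4 : ℤ) ≤ |ℓ|)
  have hbound := abs_setIntegral_mul_abs_add_rpow_le
    (fun x hx => sub_one_rpow_neg_sub_rpow_neg_nonneg (p := 2 * d1) (by linarith) hx)
    (integrableOn_Ioi_sub_one_rpow_neg_sub_rpow_neg (by linarith) (by linarith))
    (fun x hx => sub_one_rpow_neg_sub_rpow_neg_le_inv (p := 2 * d1) (by linarith) (by linarith) hx)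
    hq₁ hq₀ hℓ4
  simpa only [div_rpow (abs_nonneg _) zero_le_two, mul_div_assoc', div_mul_eq_mul_div] using hbound
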